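/- The Fourier–Stieltjes coefficients of μ satisfy the Wiener-type Cesàro decay (1/x) ∑_{0 ≤ k ≤ x} |μ̂(k)|² → 0 as x → ∞; more precisely, setting Σ_N := 2^{-N} ∑_{k=0}^{2^N} |μ̂(k)|², one has 0 ≤ Σ_N < (7/8)^{N-1} max{Σ_0, Σ_1} for all N ≥ 2. -/

import Mathlib

open MeasureTheory Filter Topology Real
open scoped ENNReal

noncomputable section

/-- Stern's diatomic sequence: s(0)=0, s(1)=1, s(2n)=s(n), s(2n+1)=s(n)+s(n+1). -/
def stern : ℕ → ℕ
  | 0 => 0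
  | 1 => 1
  | n + 2 =>
    if h : n % 2 = 0 then stern (n / 2 + 1)
    else stern (n / 2 + 1) + stern (n / 2 + 2)
decreasing_by all_goals omega
/-- The probability measure μ_n = 3^{-n} ∑_{m=0}^{2^n-1} s(2^n+m) δ_{m/2^n} on the 1-torus. -/
def sternMeasure (n : ℕ) : Measure UnitAddCircle :=
  ((3 : ℝ≥0∞) ^ n)⁻¹ • ∑ m ∈ Finset.range (2 ^ n),
    (stern (2 ^ n + m) : ℝ≥0∞) • Measure.dirac ((m / 2 ^ n : ℝ) : UnitAddCircle)
/-- The Fourier–Stieltjes coefficient ν̂(k) = ∫_𝕋 e^{-2πikx} dν(x) of a measure ν on the 1-torus. -/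
def fourierCoeffMeasure (ν : Measure UnitAddCircle) (k : ℤ) : ℂ :=
  ∫ x, fourier (-k) x ∂ν
/-- Σ_N := 2^{-N} ∑_{k=0}^{2^N} |μ̂(k)|². -/
def wienerSum (μ : Measure UnitAddCircle) (N : ℕ) : ℝ :=
  ((2 : ℝ) ^ N)⁻¹ *
    ∑ k ∈ Finset.range (2 ^ N + 1), ‖fourierCoeffMeasure μ k‖ ^ 2

/-!
The Fourier coefficients of the Stern measures form a Riesz product,
`μ̂ₙ₊₁(k) = (1 + 2 cos (π k / 2ⁿ)) / 3 · μ̂ₙ(k)`: at `2ⁿ⁺¹`-th roots of unity `z`, the generating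
polynomials `Pₙ` of the rows of Stern's sequence satisfy `Pₙ₊₁(z) = (z⁻¹ + 1 + z) Pₙ(z²)`.
The factors have modulus at most `1`, so `|μ̂(k)| ≤ |μ̂_N(k)|` for every `N`; and the factors at `k`
and `k + 2ⁿ` are `(1 ± 2 cos θ) / 3`, whose squares add up to at most `10/9`, so
`∑_{k < 2^N} |μ̂_N(k)|² ≤ (10/9)^N`. Hence `Σ_N ≤ (5/9)^N + 2^{-N}`, which is below `(7/8)^{N-1}`
for `N ≥ 2`, while `Σ₀ ≥ |μ̂(0)|² = 1`. The Cesàro mean up to `x` is at most `2 Σ_N` for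
`2^{N-1} ≤ x < 2^N`.
-/

open Finset

theorem stern_two_mul {n : ℕ} (hn : n ≠ 0) : stern (2 * n) = stern n := by
  obtain ⟨m, rfl⟩ := Nat.exists_eq_succ_of_ne_zero hn
  rw [show 2 * (m + 1) = 2 * m + 2 by ring, stern, dif_pos (by omega)]
  congr 1
  omega

theorem stern_two_mul_add_one {n : ℕ} (hn : n ≠ 0) :
    stern (2 * n + 1) = stern n + stern (n + 1) := by
  obtain ⟨m, rfl⟩ := Nat.exists_eq_succ_of_ne_zero hn
  rw [show 2 * (m + 1) + 1 = (2 * m + 1) + 2 by ring, stern, dif_neg (by omega)]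
  congr 2 <;> omega

theorem stern_two_pow (n : ℕ) : stern (2 ^ n) = 1 := by
  induction n with
  | zero => simp [stern]
  | succ n ih => rw [pow_succ', stern_two_mul (by positivity), ih]

theorem Finset.sum_range_two_mul {M : Type*} [AddCommMonoid M] (f : ℕ → M) (n : ℕ) :
    ∑ m ∈ range (2 * n), f m = ∑ j ∈ range n, (f (2 * j) + f (2 * j + 1)) := by
  induction n with
  | zero => simp
  | succ n ih =>
    rw [sum_range_succ, ← ih, mul_add, mul_one, ← add_assoc, sum_range_succ, sum_range_succ]

def sternPoly {R : Type*} [CommSemiring R] (n : ℕ) (z : R) : R :=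
  ∑ m ∈ range (2 ^ n), (stern (2 ^ n + m) : R) * z ^ m

section sternPoly

variable {R : Type*} [CommRing R]

@[simp] theorem sternPoly_zero (z : R) : sternPoly 0 z = 1 := by
  simp [sternPoly, stern]

/-- Shifting the index trades the term `s(2ⁿ) = 1` for `s(2ⁿ⁺¹) w^(2ⁿ) = 1`. -/
theorem sum_range_stern_succ_mul_pow {n : ℕ} {w : R} (hw : w ^ 2 ^ n = 1) :
    ∑ j ∈ range (2 ^ n), (stern (2 ^ n + j + 1) : R) * w ^ (j + 1) = sternPoly n w := by
  have h := (sum_range_succ' (fun j ↦ (stern (2 ^ n + j) : R) * w ^ j) (2 ^ n)).symm.trans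
    (sum_range_succ _ _)
  simp only [add_zero, pow_zero, mul_one, ← two_mul, ← pow_succ', stern_two_pow, hw,
    Nat.cast_one] at h
  simpa [sternPoly, add_assoc] using add_right_cancel h

theorem mul_sternPoly_succ {n : ℕ} {z : R} (hz : z ^ 2 ^ (n + 1) = 1) :
    z * sternPoly (n + 1) z = (1 + z + z ^ 2) * sternPoly n (z ^ 2) := by
  have hw : (z ^ 2) ^ 2 ^ n = 1 := by rwa [← pow_mul, ← pow_succ']
  have hsplit : z * sternPoly (n + 1) z = ∑ j ∈ range (2 ^ n),
      ((stern (2 ^ n + j) : R) * (z * (z ^ 2) ^ j + z ^ 2 * (z ^ 2) ^ j)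
        + (stern (2 ^ n + j + 1) : R) * (z ^ 2) ^ (j + 1)) := by
    rw [sternPoly, mul_sum, pow_succ', sum_range_two_mul]
    refine sum_congr rfl fun j _ ↦ ?_
    rw [show 2 * 2 ^ n + 2 * j = 2 * (2 ^ n + j) by ring,
      show 2 * 2 ^ n + (2 * j + 1) = 2 * (2 ^ n + j) + 1 by ring,
      stern_two_mul (by positivity), stern_two_mul_add_one (by positivity)]
    push_cast
    ring
  rw [hsplit, sum_add_distrib, sum_range_stern_succ_mul_pow hw, sternPoly, mul_sum,
    ← sum_add_distrib]
  refine sum_congr rfl fun j _ ↦ ?_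
  ring

end sternPoly

def dyadicRoot (n : ℕ) (k : ℤ) : ℂ := Complex.exp (-(2 * π * Complex.I * k / 2 ^ n))

theorem dyadicRoot_pow_two_pow (n : ℕ) (k : ℤ) : dyadicRoot n k ^ 2 ^ n = 1 := by
  rw [dyadicRoot, ← Complex.exp_nat_mul, ← Complex.exp_int_mul_two_pi_mul_I (-k)]
  congr 1
  push_cast
  field_simp

theorem dyadicRoot_succ_sq (n : ℕ) (k : ℤ) : dyadicRoot (n + 1) k ^ 2 = dyadicRoot n k := by
  rw [dyadicRoot, dyadicRoot, ← Complex.exp_nat_mul]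
  congr 1
  push_cast
  field_simp
  ring

theorem dyadicRoot_add_two_pow (n : ℕ) (k : ℤ) : dyadicRoot n (k + 2 ^ n) = dyadicRoot n k := by
  rw [dyadicRoot, dyadicRoot, ← mul_one (Complex.exp (-(_ * k / _))),
    ← Complex.exp_int_mul_two_pi_mul_I (-1), ← Complex.exp_add]
  congr 1
  push_cast
  field_simp
  ring

theorem dyadicRoot_add_inv (n : ℕ) (k : ℤ) :
    dyadicRoot (n + 1) k + (dyadicRoot (n + 1) k)⁻¹ = 2 * Real.cos (π * k / 2 ^ n) := by
  rw [dyadicRoot, ← Complex.exp_neg, Complex.ofReal_cos, Complex.two_cos, add_comm]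
  congr 2 <;> push_cast <;> field_simp <;> ring

theorem fourier_neg_coe_div_two_pow (n m : ℕ) (k : ℤ) :
    fourier (-k) ((m / 2 ^ n : ℝ) : UnitAddCircle) = dyadicRoot n k ^ m := by
  rw [fourier_coe_apply, dyadicRoot, ← Complex.exp_nat_mul]
  congr 1
  push_cast
  ring

instance (n : ℕ) : IsFiniteMeasure (sternMeasure n) := by
  refine ⟨?_⟩
  simp only [sternMeasure, Measure.smul_apply, Measure.coe_finsetSum, Measure.coe_smul,
    Finset.sum_apply, Pi.smul_apply, measure_univ, smul_eq_mul, mul_one]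
  exact ENNReal.mul_lt_top (ENNReal.inv_lt_top.2 (by positivity))
    (ENNReal.sum_lt_top.2 fun _ _ ↦ ENNReal.natCast_lt_top _)

theorem integral_sternMeasure {E : Type*} [NormedAddCommGroup E] [NormedSpace ℝ E]
    [CompleteSpace E] (n : ℕ) (f : UnitAddCircle → E) :
    ∫ x, f x ∂sternMeasure n = ((3 : ℝ) ^ n)⁻¹ •
      ∑ m ∈ range (2 ^ n), (stern (2 ^ n + m) : ℝ) • f ((m / 2 ^ n : ℝ) : UnitAddCircle) := by
  rw [sternMeasure, integral_smul_measure,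
    integral_finsetSum_measure fun m _ ↦ (integrable_dirac (by simp)).smul_measure (by simp)]
  simp [integral_smul_measure, integral_dirac]

theorem fourierCoeffMeasure_sternMeasure (n : ℕ) (k : ℤ) :
    fourierCoeffMeasure (sternMeasure n) k = ((3 : ℂ) ^ n)⁻¹ * sternPoly n (dyadicRoot n k) := by
  simp only [fourierCoeffMeasure, integral_sternMeasure, fourier_neg_coe_div_two_pow, sternPoly,
    Complex.real_smul]
  push_cast
  rfl

@[simp] theorem fourierCoeffMeasure_sternMeasure_zero (k : ℤ) :
    fourierCoeffMeasure (sternMeasure 0) k = 1 := by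
  simp [fourierCoeffMeasure_sternMeasure]

theorem fourierCoeffMeasure_sternMeasure_add_two_pow (n : ℕ) (k : ℤ) :
    fourierCoeffMeasure (sternMeasure n) (k + 2 ^ n) = fourierCoeffMeasure (sternMeasure n) k := by
  rw [fourierCoeffMeasure_sternMeasure, fourierCoeffMeasure_sternMeasure, dyadicRoot_add_two_pow]

theorem fourierCoeffMeasure_sternMeasure_succ (n : ℕ) (k : ℤ) :
    fourierCoeffMeasure (sternMeasure (n + 1)) k =
      ((1 + 2 * Real.cos (π * k / 2 ^ n)) / 3 : ℝ) * fourierCoeffMeasure (sternMeasure n) k := by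
  have hrec := mul_sternPoly_succ (dyadicRoot_pow_two_pow (n + 1) k)
  rw [dyadicRoot_succ_sq] at hrec
  set z := dyadicRoot (n + 1) k
  have hz : z ≠ 0 := Complex.exp_ne_zero _
  have hpoly : sternPoly (n + 1) z = (1 + (z + z⁻¹)) * sternPoly n (dyadicRoot n k) := by
    field_simp
    linear_combination hrec - sternPoly n (dyadicRoot n k) * dyadicRoot_succ_sq n k
  rw [fourierCoeffMeasure_sternMeasure, fourierCoeffMeasure_sternMeasure, hpoly,
    dyadicRoot_add_inv]
  push_cast
  ring

theorem norm_fourierCoeffMeasure_sternMeasure_succ (n : ℕ) (k : ℤ) :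
    ‖fourierCoeffMeasure (sternMeasure (n + 1)) k‖ =
      |(1 + 2 * Real.cos (π * k / 2 ^ n)) / 3| * ‖fourierCoeffMeasure (sternMeasure n) k‖ := by
  rw [fourierCoeffMeasure_sternMeasure_succ, norm_mul, Complex.norm_real, Real.norm_eq_abs]

theorem antitone_norm_fourierCoeffMeasure_sternMeasure (k : ℤ) :
    Antitone fun n ↦ ‖fourierCoeffMeasure (sternMeasure n) k‖ := by
  refine antitone_nat_of_succ_le fun n ↦ ?_
  rw [norm_fourierCoeffMeasure_sternMeasure_succ]
  refine mul_le_of_le_one_left (norm_nonneg _) (abs_le.2 ⟨?_, ?_⟩) <;>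
    linarith [Real.cos_le_one (π * k / 2 ^ n), Real.neg_one_le_cos (π * k / 2 ^ n)]

theorem norm_sq_fourierCoeffMeasure_sternMeasure_succ_add_le (n : ℕ) (k : ℤ) :
    ‖fourierCoeffMeasure (sternMeasure (n + 1)) k‖ ^ 2 +
        ‖fourierCoeffMeasure (sternMeasure (n + 1)) (k + 2 ^ n)‖ ^ 2 ≤
      10 / 9 * ‖fourierCoeffMeasure (sternMeasure n) k‖ ^ 2 := by
  have hshift : π * ((k + 2 ^ n : ℤ) : ℝ) / 2 ^ n = π * k / 2 ^ n + π := by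
    push_cast
    field_simp
  rw [norm_fourierCoeffMeasure_sternMeasure_succ, norm_fourierCoeffMeasure_sternMeasure_succ,
    fourierCoeffMeasure_sternMeasure_add_two_pow, hshift, Real.cos_add_pi, mul_pow, mul_pow,
    sq_abs, sq_abs, ← add_mul]
  refine mul_le_mul_of_nonneg_right ?_ (sq_nonneg _)
  nlinarith [Real.cos_sq_le_one (π * k / 2 ^ n)]

theorem sum_norm_sq_fourierCoeffMeasure_sternMeasure_le (n : ℕ) :
    ∑ k ∈ range (2 ^ n), ‖fourierCoeffMeasure (sternMeasure n) k‖ ^ 2 ≤ (10 / 9) ^ n := by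
  induction n with
  | zero => simp
  | succ n ih =>
    calc ∑ k ∈ range (2 ^ (n + 1)), ‖fourierCoeffMeasure (sternMeasure (n + 1)) k‖ ^ 2
        = ∑ k ∈ range (2 ^ n), (‖fourierCoeffMeasure (sternMeasure (n + 1)) k‖ ^ 2 +
            ‖fourierCoeffMeasure (sternMeasure (n + 1)) ((k : ℤ) + 2 ^ n)‖ ^ 2) := by
          rw [pow_succ, mul_two, sum_range_add, ← sum_add_distrib]
          push_cast
          simp only [add_comm]
      _ ≤ ∑ k ∈ range (2 ^ n), 10 / 9 * ‖fourierCoeffMeasure (sternMeasure n) k‖ ^ 2 :=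
          sum_le_sum fun k _ ↦ norm_sq_fourierCoeffMeasure_sternMeasure_succ_add_le n k
      _ ≤ (10 / 9) ^ (n + 1) := by
          rw [← mul_sum, pow_succ']
          gcongr

theorem tendsto_integral_of_forall_tendsto_integral_real {X γ 𝕜 : Type*} [TopologicalSpace X]
    [CompactSpace X] [MeasurableSpace X] [OpensMeasurableSpace X] [RCLike 𝕜] {l : Filter γ}
    {ν : γ → Measure X} {μ : Measure X} [∀ i, IsFiniteMeasure (ν i)] [IsFiniteMeasure μ]
    (h : ∀ f : C(X, ℝ), Tendsto (fun i ↦ ∫ x, f x ∂ν i) l (𝓝 (∫ x, f x ∂μ))) (f : C(X, 𝕜)) :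
    Tendsto (fun i ↦ ∫ x, f x ∂ν i) l (𝓝 (∫ x, f x ∂μ)) := by
  have hweak : Tendsto (β := FiniteMeasure X) (fun i ↦ ⟨ν i, inferInstance⟩) l
      (𝓝 ⟨μ, inferInstance⟩) :=
    FiniteMeasure.tendsto_of_forall_integral_tendsto fun g ↦ h g.toContinuousMap
  exact (FiniteMeasure.tendsto_iff_forall_integral_rclike_tendsto 𝕜).1 hweak (.mkOfCompact f)

theorem tendsto_inv_mul_sum_range_floor_of_tendsto_dyadic {a : ℕ → ℝ} (ha : ∀ k, 0 ≤ a k)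
    (h : Tendsto (fun N : ℕ ↦ ((2 : ℝ) ^ N)⁻¹ * ∑ k ∈ range (2 ^ N + 1), a k) atTop (𝓝 0)) :
    Tendsto (fun x : ℝ ↦ x⁻¹ * ∑ k ∈ range (⌊x⌋₊ + 1), a k) atTop (𝓝 0) := by
  set S : ℕ → ℝ := fun N ↦ ((2 : ℝ) ^ N)⁻¹ * ∑ k ∈ range (2 ^ N + 1), a k
  have hlog : Tendsto (fun x : ℝ ↦ Nat.log 2 ⌊x⌋₊ + 1) atTop atTop := by
    refine (tendsto_add_atTop_nat 1).comp <| (tendsto_atTop_atTop.2 fun b ↦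
      ⟨2 ^ b, fun n hn ↦ Nat.le_log_of_pow_le one_lt_two hn⟩).comp tendsto_nat_floor_atTop
  have hle : ∀ x : ℝ, 1 ≤ x →
      x⁻¹ * ∑ k ∈ range (⌊x⌋₊ + 1), a k ≤ 2 * S (Nat.log 2 ⌊x⌋₊ + 1) := by
    intro x hx
    have hfloor : ⌊x⌋₊ ≠ 0 := Nat.one_le_iff_ne_zero.1 ((Nat.one_le_floor_iff x).2 hx)
    have hpow_le : (2 : ℝ) ^ Nat.log 2 ⌊x⌋₊ ≤ x :=
      le_trans (by exact_mod_cast Nat.pow_log_le_self 2 hfloor) (Nat.floor_le (by linarith))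
    have hsum : ∑ k ∈ range (⌊x⌋₊ + 1), a k ≤ ∑ k ∈ range (2 ^ (Nat.log 2 ⌊x⌋₊ + 1) + 1), a k :=
      sum_le_sum_of_subset_of_nonneg
        (range_subset_range.2 (Nat.succ_le_succ (Nat.lt_pow_succ_log_self one_lt_two _).le))
        fun k _ _ ↦ ha k
    calc x⁻¹ * ∑ k ∈ range (⌊x⌋₊ + 1), a k
        ≤ ((2 : ℝ) ^ Nat.log 2 ⌊x⌋₊)⁻¹ * ∑ k ∈ range (2 ^ (Nat.log 2 ⌊x⌋₊ + 1) + 1), a k := by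
          gcongr
          exact sum_nonneg fun k _ ↦ ha k
      _ = 2 * S (Nat.log 2 ⌊x⌋₊ + 1) := by
          simp only [S, pow_succ]
          field_simp
  refine squeeze_zero' ?_ ?_ (by simpa using (h.comp hlog).const_mul 2)
  · filter_upwards [eventually_ge_atTop 1] with x hx
    exact mul_nonneg (inv_nonneg.2 (by linarith)) (sum_nonneg fun k _ ↦ ha k)
  · filter_upwards [eventually_ge_atTop 1] with x hx
    exact hle x hx

theorem five_ninths_pow_add_half_pow_lt (M : ℕ) :
    (5 / 9 : ℝ) ^ (M + 2) + (1 / 2) ^ (M + 2) < (7 / 8) ^ (M + 1) := by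
  induction M with
  | zero => norm_num
  | succ M ih =>
    calc (5 / 9 : ℝ) ^ (M + 1 + 2) + (1 / 2) ^ (M + 1 + 2)
        = 5 / 9 * (5 / 9) ^ (M + 2) + 1 / 2 * (1 / 2) ^ (M + 2) := by ring
      _ ≤ 7 / 8 * ((5 / 9) ^ (M + 2) + (1 / 2) ^ (M + 2)) := by
        nlinarith [pow_pos (by norm_num : (0 : ℝ) < 5 / 9) (M + 2),
          pow_pos (by norm_num : (0 : ℝ) < 1 / 2) (M + 2)]
      _ < 7 / 8 * (7 / 8) ^ (M + 1) := by gcongr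
      _ = (7 / 8) ^ (M + 1 + 1) := by ring

section LimitMeasure

variable {μ : Measure UnitAddCircle}

theorem one_le_wienerSum_zero [IsProbabilityMeasure μ] : 1 ≤ wienerSum μ 0 := by
  have h1 : fourierCoeffMeasure μ 0 = 1 := by simp [fourierCoeffMeasure]
  simp [wienerSum, sum_range_succ, h1]

variable [IsFiniteMeasure μ]
  (hlim : ∀ f : C(UnitAddCircle, ℝ),
    Tendsto (fun n ↦ ∫ x, f x ∂sternMeasure n) atTop (𝓝 (∫ x, f x ∂μ)))
include hlim

theorem norm_fourierCoeffMeasure_le_sternMeasure (k : ℤ) (N : ℕ) :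
    ‖fourierCoeffMeasure μ k‖ ≤ ‖fourierCoeffMeasure (sternMeasure N) k‖ :=
  (antitone_norm_fourierCoeffMeasure_sternMeasure k).le_of_tendsto
    (tendsto_integral_of_forall_tendsto_integral_real hlim (fourier (-k))).norm N

theorem wienerSum_le (N : ℕ) : wienerSum μ N ≤ (5 / 9) ^ N + (1 / 2) ^ N := by
  have hlast : ‖fourierCoeffMeasure μ (2 ^ N : ℕ)‖ ^ 2 ≤ 1 := by
    simpa using pow_le_pow_left₀ (norm_nonneg _)
      (norm_fourierCoeffMeasure_le_sternMeasure hlim (2 ^ N : ℕ) 0) 2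
  have hfirst : ∑ k ∈ range (2 ^ N), ‖fourierCoeffMeasure μ k‖ ^ 2 ≤ (10 / 9) ^ N :=
    (sum_le_sum fun (k : ℕ) _ ↦ pow_le_pow_left₀ (norm_nonneg _)
      (norm_fourierCoeffMeasure_le_sternMeasure hlim k N) 2).trans
      (sum_norm_sq_fourierCoeffMeasure_sternMeasure_le N)
  calc wienerSum μ N ≤ ((2 : ℝ) ^ N)⁻¹ * ((10 / 9) ^ N + 1) := by
        rw [wienerSum, sum_range_succ]
        gcongr
    _ = (5 / 9) ^ N + (1 / 2) ^ N := by
        rw [mul_add, ← inv_pow, ← mul_pow]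
        norm_num

end LimitMeasure

/-- Wiener-type Cesàro decay: (1/x) ∑_{0 ≤ k ≤ x} |μ̂(k)|² → 0 as x → ∞; more precisely,
0 ≤ Σ_N < (7/8)^{N-1} · max{Σ_0, Σ_1} for all N ≥ 2. -/
theorem fourierCoeff_limit_wiener (μ : Measure UnitAddCircle)
    (hμ : IsProbabilityMeasure μ)
    (hlim : ∀ f : C(UnitAddCircle, ℝ),
      Tendsto (fun n => ∫ x, f x ∂(sternMeasure n)) atTop (𝓝 (∫ x, f x ∂μ))) :
    Tendsto
      (fun x : ℝ => x⁻¹ *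
        ∑ k ∈ Finset.range (⌊x⌋₊ + 1), ‖fourierCoeffMeasure μ k‖ ^ 2)
      atTop (𝓝 0) ∧
    ∀ N : ℕ, 2 ≤ N →
      0 ≤ wienerSum μ N ∧
      wienerSum μ N < (7 / 8 : ℝ) ^ (N - 1) * max (wienerSum μ 0) (wienerSum μ 1) := by
  have hbound := wienerSum_le hlim
  have hnonneg (N : ℕ) : 0 ≤ wienerSum μ N := by unfold wienerSum; positivity
  refine ⟨tendsto_inv_mul_sum_range_floor_of_tendsto_dyadic (fun k ↦ by positivity) ?_,
    fun N hN ↦ ⟨hnonneg N, ?_⟩⟩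
  · refine squeeze_zero hnonneg hbound ?_
    simpa using (tendsto_pow_atTop_nhds_zero_of_lt_one (by norm_num) (by norm_num)).add
      (tendsto_pow_atTop_nhds_zero_of_lt_one (by norm_num) (by norm_num) :
        Tendsto (fun N : ℕ ↦ (1 / 2 : ℝ) ^ N) atTop _)
  · obtain ⟨M, rfl⟩ := Nat.exists_eq_add_of_le' hN
    calc wienerSum μ (M + 2) < (7 / 8) ^ (M + 1) :=
          (hbound _).trans_lt (five_ninths_pow_add_half_pow_lt M)
      _ ≤ (7 / 8) ^ (M + 2 - 1) * max (wienerSum μ 0) (wienerSum μ 1) :=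
        le_mul_of_one_le_right (by positivity) (le_max_of_le_left one_le_wienerSum_zero)
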